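/- arXiv:1607.05610 — 2 statements merged into one kernel-verified Lean document; each statement's English description precedes it below -/
import Mathlib

section
/- Let (J_i)_{i∈ω} be a sequence of pairwise non-isomorphic maximal ideals on ω, and let I be the Fin-Fubini sum of the J_i, i.e. the ideal on ω×ω given by C ∈ I if and only if {i ∈ ω : C_i ∉ J_i} is finite, where C_i = {j : (i,j) ∈ C}. Then I satisfies condition (C1): every bi-I-invariant injection f : ω×ω → ω×ω has fix(f) ∈ I*. -/
open Set Filter

/-- `I` is an ideal on the countable set `X`: closed under subsets and finite
unions, contains all finite sets, and does not contain the whole set. -/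
def IsIdeal {X : Type*} (I : Set (Set X)) : Prop :=
  (∀ A B : Set X, A ∈ I → B ⊆ A → B ∈ I) ∧
  (∀ A B : Set X, A ∈ I → B ∈ I → A ∪ B ∈ I) ∧
  (∀ A : Set X, A.Finite → A ∈ I) ∧
  (Set.univ : Set X) ∉ I

/-- The restriction `I|A = {B ∩ A : B ∈ I}`. -/
def restr {X : Type*} (I : Set (Set X)) (A : Set X) : Set (Set X) :=
  {C | ∃ B ∈ I, C = B ∩ A}

/-- `I|A ≅ I|B`: there is a bijection `f : B → A` such that for every
`C ⊆ A`, `C ∈ I|A ↔ f⁻¹[C] ∈ I|B`. -/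
def RIso {X : Type*} (I : Set (Set X)) (A B : Set X) : Prop :=
  ∃ f : X → X, Set.BijOn f B A ∧
    ∀ C : Set X, C ⊆ A → (C ∈ restr I A ↔ B ∩ f ⁻¹' C ∈ restr I B)

/-- The homogeneity family `H(I) = {A : I|A ≅ I}`. -/
def HF {X : Type*} (I : Set (Set X)) : Set (Set X) := {A | RIso I A Set.univ}

/-- `I` is homogeneous if `H(I) = I⁺`. -/
def HomogIdeal {X : Type*} (I : Set (Set X)) : Prop := HF I = {A | A ∉ I}

/-- `I` is anti-homogeneous if `H(I) = I*`. -/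
def AntiHomogIdeal {X : Type*} (I : Set (Set X)) : Prop := HF I = {A | Aᶜ ∈ I}

/-- `I ≅ J`: a bijection `f` of underlying sets with `A ∈ I ↔ f⁻¹[A] ∈ J`. -/
def Isomorphic {X Y : Type*} (I : Set (Set X)) (J : Set (Set Y)) : Prop :=
  ∃ f : Y → X, Function.Bijective f ∧ ∀ A : Set X, A ∈ I ↔ f ⁻¹' A ∈ J

/-- The ideal `Fin ⊕ P(ω)` on `{0,1} × ω` (here `Bool × ℕ`, `true` playing the
role of `1`): all sets `A` with `{n : (1,n) ∈ A}` finite. -/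
def FinOplusAll : Set (Set (Bool × ℕ)) := {A | {n : ℕ | (true, n) ∈ A}.Finite}

/-- An ideal on `ω` is admissible if it is not isomorphic to `Fin ⊕ P(ω)`. -/
def Admissible (I : Set (Set ℕ)) : Prop := ¬ Isomorphic I FinOplusAll

/-- An injection `f` is bi-`I`-invariant if `f[A] ∈ I ↔ A ∈ I` for all `A`. -/
def BiInvariant {X : Type*} (I : Set (Set X)) (f : X → X) : Prop :=
  Function.Injective f ∧ ∀ A : Set X, f '' A ∈ I ↔ A ∈ I

/-- The set of fixed points of `f`. -/
def fixedSet {X : Type*} (f : X → X) : Set X := {x | f x = x}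

/-- `I` is a maximal ideal. -/
def MaximalIdeal {X : Type*} (I : Set (Set X)) : Prop :=
  IsIdeal I ∧ ∀ A : Set X, A ∈ I ∨ Aᶜ ∈ I

/-- The `Fin`-Fubini sum of a sequence of ideals on `ω`: an ideal on `ω × ω`. -/
def FubiniSum (J : ℕ → Set (Set ℕ)) : Set (Set (ℕ × ℕ)) :=
  {C | {i : ℕ | {j : ℕ | (i, j) ∈ C} ∉ J i}.Finite}

/-!
Suppose the moved set of `f` had infinitely many sections outside `J i`. For each such `i`, either
every part `movesTo f i k` of the `i`-th section is in `J i`, so that `f` scatters the section over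
infinitely many others, or some `movesTo f i k` has a moved part outside `J i`. In the second case
that part shrinks to a `D ∉ J i` whose image under `f` is in `J k`: for `k = i` by Katětov's
colouring argument for fixed-point-free injections, for `k ≠ i` because otherwise `f` would extend
to an isomorphism of `J k` with `J i`. Passing to infinitely many sections on which the chosen
target section is constant or finite-to-one, one builds in either case a set `C` such that exactly
one of `C` and `f '' C` lies in the Fubini sum, against bi-invariance.
-/

open Function

namespace IsIdeal

variable {X : Type*} {K : Set (Set X)}

theorem mono (hK : IsIdeal K) {A B : Set X} (hA : A ∈ K) (hBA : B ⊆ A) : B ∈ K :=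
  hK.1 A B hA hBA

theorem union_mem (hK : IsIdeal K) {A B : Set X} (hA : A ∈ K) (hB : B ∈ K) : A ∪ B ∈ K :=
  hK.2.1 A B hA hB

theorem empty_mem (hK : IsIdeal K) : (∅ : Set X) ∈ K :=
  hK.2.2.1 ∅ finite_empty

theorem infinite_of_notMem (hK : IsIdeal K) {A : Set X} (hA : A ∉ K) : A.Infinite :=
  fun hfin => hA (hK.2.2.1 A hfin)

theorem compl_notMem (hK : IsIdeal K) {A : Set X} (hA : A ∈ K) : Aᶜ ∉ K :=
  fun hAc => hK.2.2.2 (union_compl_self A ▸ hK.union_mem hA hAc)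

theorem biUnion_mem {ι : Type*} (hK : IsIdeal K) {s : Set ι} (hs : s.Finite) {A : ι → Set X}
    (h : ∀ i ∈ s, A i ∈ K) : ⋃ i ∈ s, A i ∈ K := by
  induction s, hs using Set.Finite.induction_on with
  | empty => simpa using hK.empty_mem
  | @insert a s _ _ ih =>
    rw [biUnion_insert]
    exact hK.union_mem (h a (mem_insert a s)) (ih fun i hi => h i (mem_insert_of_mem a hi))

theorem exists_notMem_of_subset_biUnion {ι : Type*} (hK : IsIdeal K) {s : Set ι} (hs : s.Finite)
    {A : ι → Set X} {B : Set X} (hB : B ∉ K) (hBA : B ⊆ ⋃ i ∈ s, A i) : ∃ i ∈ s, A i ∉ K := by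
  by_contra! h
  exact hB (hK.mono (hK.biUnion_mem hs h) hBA)

end IsIdeal

namespace MaximalIdeal

variable {X : Type*} {K : Set (Set X)}

theorem compl_mem (hK : MaximalIdeal K) {A : Set X} (hA : A ∉ K) : Aᶜ ∈ K :=
  (hK.2 A).resolve_left hA

theorem inter_notMem (hK : MaximalIdeal K) {A B : Set X} (hA : A ∉ K) (hB : B ∉ K) :
    A ∩ B ∉ K := by
  intro hAB
  refine hK.1.compl_notMem hAB (hK.1.mono (hK.1.union_mem (hK.compl_mem hA) (hK.compl_mem hB)) ?_)
  rw [compl_inter]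

theorem mem_iff_preimage_mem {Y : Type*} {L : Set (Set Y)} (hK : MaximalIdeal K)
    (hL : IsIdeal L) {φ : Y → X} (h : ∀ A, φ ⁻¹' A ∉ L → A ∉ K) (A : Set X) :
    A ∈ K ↔ φ ⁻¹' A ∈ L := by
  refine ⟨fun hA => by_contra fun hA' => h A hA' hA, fun hA => by_contra fun hA' => ?_⟩
  exact h Aᶜ (hL.compl_notMem hA) (hK.compl_mem hA')

theorem exists_infinite_subset_mem (hK : MaximalIdeal K) {A : Set X} (hA : A.Infinite) :
    ∃ E ⊆ A, E.Infinite ∧ E ∈ K := by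
  let v : ℕ → X := fun n => hA.natEmbedding _ n
  have hv : Injective v := Subtype.val_injective.comp (hA.natEmbedding _).injective
  have hsub : ∀ g : ℕ → ℕ, range (v ∘ g) ⊆ A := by
    rintro g _ ⟨n, rfl⟩
    exact (hA.natEmbedding _ (g n)).2
  have hinf : ∀ g : ℕ → ℕ, Injective g → (range (v ∘ g)).Infinite :=
    fun g hg => infinite_range_of_injective (hv.comp hg)
  have hdisj : range (v ∘ fun n => 2 * n) ∩ range (v ∘ fun n => 2 * n + 1) = ∅ := by
    refine eq_empty_of_forall_notMem ?_
    rintro _ ⟨⟨a, rfl⟩, ⟨b, hb⟩⟩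
    have : 2 * b + 1 = 2 * a := hv hb
    omega
  by_cases heven : range (v ∘ fun n => 2 * n) ∈ K
  · exact ⟨_, hsub _, hinf _ fun a b hab => by omega, heven⟩
  · refine ⟨range (v ∘ fun n => 2 * n + 1), hsub _, hinf _ fun a b hab => by omega,
      by_contra fun hodd => ?_⟩
    exact hK.inter_notMem heven hodd (hdisj ▸ hK.1.empty_mem)

end MaximalIdeal

theorem Set.Infinite.exists_subset_finite_fibers {α β : Type*} {S : Set α} (hS : S.Infinite)
    (σ : α → β) : ∃ R ⊆ S, R.Infinite ∧ ∃ b₀, ∀ b ≠ b₀, {a ∈ R | σ a = b}.Finite := by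
  by_cases h : ∃ b₀, {a ∈ S | σ a = b₀}.Infinite
  · obtain ⟨b₀, hb₀⟩ := h
    refine ⟨_, sep_subset _ _, hb₀, b₀, fun b hb => finite_empty.subset ?_⟩
    rintro a ⟨⟨-, rfl⟩, rfl⟩
    exact hb rfl
  · push Not at h
    obtain ⟨a, -⟩ := hS.nonempty
    exact ⟨S, subset_rfl, hS, σ a, fun b _ => h b⟩

theorem Set.InjOn.exists_bijective_eqOn {α : Type*} [Countable α] {A : Set α} {h : α → α}
    (hinj : InjOn h A) (hA : Aᶜ.Infinite) (hhA : (h '' A)ᶜ.Infinite) :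
    ∃ φ : α → α, Bijective φ ∧ EqOn φ h A := by
  let e : A ↪ α := ⟨A.domRestrict h, hinj.injective⟩
  have : Infinite ↥Aᶜ := hA.to_subtype
  have : Infinite ↥(range e)ᶜ := by
    rw [show range e = h '' A from range_domRestrict h A]
    exact hhA.to_subtype
  obtain ⟨φ, hφ⟩ := Cardinal.extend_function e nonempty_equiv_of_countable
  exact ⟨φ, φ.bijective, fun x hx => hφ ⟨x, hx⟩⟩

theorem exists_subset_notMem_image_mem_of_not_isomorphic {K L : Set (Set ℕ)}
    (hK : MaximalIdeal K) (hL : MaximalIdeal L) (hKL : ¬ Isomorphic L K) {A : Set ℕ} {h : ℕ → ℕ}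
    (hA : A ∉ K) (hinj : InjOn h A) : ∃ D ⊆ A, D ∉ K ∧ h '' D ∈ L := by
  by_contra! hbig
  obtain ⟨E, hEA, hE, hEK⟩ := hK.exists_infinite_subset_mem (hK.1.infinite_of_notMem hA)
  have hAE : A \ E ∉ K := hK.inter_notMem hA (hK.1.compl_notMem hEK)
  have himage : h '' E ⊆ (h '' (A \ E))ᶜ := by
    rintro _ ⟨e, he, rfl⟩ ⟨a, ha, hae⟩
    exact ha.2 (hinj (sdiff_subset ha) (hEA he) hae ▸ he)
  obtain ⟨φ, hφ, hφh⟩ := (hinj.mono sdiff_subset).exists_bijective_eqOn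
    (hE.mono fun x hx hx' => hx'.2 hx) ((hE.image (hinj.mono hEA)).mono himage)
  refine hKL ⟨φ, hφ, hL.mem_iff_preimage_mem hK.1 fun Y hY hYL => ?_⟩
  refine hbig _ (inter_subset_right.trans sdiff_subset) (hK.inter_notMem hY hAE) (hL.1.mono hYL ?_)
  rintro _ ⟨x, ⟨hxY, hxA⟩, rfl⟩
  exact hφh hxA ▸ hxY

def descentLength (g : ℕ → ℕ) (n : ℕ) : ℕ :=
  if g n < n then descentLength g (g n) + 1 else 0
termination_by n
decreasing_by assumption

theorem descentLength_of_lt {g : ℕ → ℕ} {n : ℕ} (hn : g n < n) :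
    descentLength g n = descentLength g (g n) + 1 := by
  rw [descentLength, if_pos hn]

/- The parity of `descentLength` flips along every descending step, so it separates `j` from `h j`
when `h j < j`; when `h j > j`, the same holds for the descents of the inverse of `h`. -/
theorem exists_coloring_apply_ne {B : Set ℕ} {h : ℕ → ℕ} (hinj : InjOn h B)
    (hfix : ∀ j ∈ B, h j ≠ j) : ∃ χ : ℕ → Bool × Bool, ∀ j ∈ B, χ (h j) ≠ χ j := by
  let g := invFunOn h B
  let χ : ℕ → Bool × Bool := fun j =>
    if h j < j then (true, decide (Even (descentLength h j)))
    else (false, decide (Even (descentLength g j)))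
  refine ⟨χ, fun j hj => ?_⟩
  rcases (hfix j hj).lt_or_gt with hlt | hgt
  · have hd := descentLength_of_lt hlt
    simp only [χ, if_pos hlt]
    split_ifs <;> simp [hd, Nat.even_add_one, -Nat.not_even_iff_odd]
  · have hgh : g (h j) = j := hinj.leftInvOn_invFunOn hj
    have hd : descentLength g (h j) = descentLength g j + 1 := by
      rw [descentLength_of_lt (by rwa [hgh]), hgh]
    simp only [χ, if_neg hgt.not_gt]
    split_ifs <;> simp [hd, Nat.even_add_one, -Nat.not_even_iff_odd]

theorem MaximalIdeal.exists_subset_notMem_image_mem {K : Set (Set ℕ)} (hK : MaximalIdeal K)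
    {B : Set ℕ} {h : ℕ → ℕ} (hB : B ∉ K) (hinj : InjOn h B) (hfix : ∀ j ∈ B, h j ≠ j) :
    ∃ D ⊆ B, D ∉ K ∧ h '' D ∈ K := by
  obtain ⟨χ, hχ⟩ := exists_coloring_apply_ne hinj hfix
  have hcover : B ⊆ ⋃ c ∈ (univ : Set (Bool × Bool)), {j ∈ B | χ j = c} :=
    fun j hj => mem_biUnion (mem_univ (χ j)) ⟨hj, rfl⟩
  obtain ⟨c, -, hc⟩ := hK.1.exists_notMem_of_subset_biUnion finite_univ hB hcover
  refine ⟨_, sep_subset _ _, hc, hK.1.mono (hK.compl_mem hc) ?_⟩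
  rintro _ ⟨j, ⟨hj, rfl⟩, rfl⟩ ⟨-, hjc⟩
  exact hχ j hj hjc

section FubiniSum

variable {J : ℕ → Set (Set ℕ)} {f : ℕ × ℕ → ℕ × ℕ}

theorem mem_fubiniSum_of_forall_notMem {C : Set (ℕ × ℕ)} {F : Set ℕ} (hF : F.Finite)
    (h : ∀ i ∉ F, {j | (i, j) ∈ C} ∈ J i) : C ∈ FubiniSum J :=
  hF.subset fun i hi => by_contra fun hiF => hi (h i hiF)

theorem notMem_fubiniSum {C : Set (ℕ × ℕ)} {S : Set ℕ} (hS : S.Infinite)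
    (h : ∀ i ∈ S, {j | (i, j) ∈ C} ∉ J i) : C ∉ FubiniSum J :=
  fun hC => hS (hC.subset h)

def movesTo (f : ℕ × ℕ → ℕ × ℕ) (i k : ℕ) : Set ℕ := {j | (f (i, j)).1 = k}

def rowMap (f : ℕ × ℕ → ℕ × ℕ) (i j : ℕ) : ℕ := (f (i, j)).2

theorem injOn_rowMap_movesTo (hf : Injective f) (i k : ℕ) :
    InjOn (rowMap f i) (movesTo f i k) :=
  fun _ ha _ hb hab => congrArg Prod.snd (hf (Prod.ext (ha.trans hb.symm) hab))

theorem image_mem_fubiniSum_of_finite_fibers (hJ : ∀ i, IsIdeal (J i)) {R : Set ℕ} {σ : ℕ → ℕ}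
    {D : ℕ → Set ℕ} {k₀ : ℕ} (hfib : ∀ k ≠ k₀, {i ∈ R | σ i = k}.Finite)
    (hD : ∀ i ∈ R, D i ⊆ movesTo f i (σ i)) (hsmall : ∀ i ∈ R, rowMap f i '' D i ∈ J (σ i)) :
    f '' {p | p.1 ∈ R ∧ p.2 ∈ D p.1} ∈ FubiniSum J := by
  refine mem_fubiniSum_of_forall_notMem (finite_singleton k₀) fun k hk => ?_
  refine (hJ k).mono ((hJ k).biUnion_mem (hfib k hk) fun i hi => hi.2 ▸ hsmall i hi.1) ?_
  rintro _ ⟨⟨i, j⟩, ⟨hi, hj⟩, hfij⟩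
  have hσ : σ i = k := (hD i hi hj).symm.trans (congrArg Prod.fst hfij)
  exact mem_biUnion ⟨hi, hσ⟩ ⟨j, hj, congrArg Prod.snd hfij⟩

theorem forward_notMem_of_forall_movesTo_mem {i : ℕ} (hJ : IsIdeal (J i))
    (h : ∀ k, movesTo f i k ∈ J i) : {j | i < (f (i, j)).1} ∉ J i := by
  refine fun hfwd => hJ.2.2.2 (hJ.mono (hJ.union_mem hfwd
    (hJ.biUnion_mem (finite_Iic i) fun k _ => h k)) fun j _ => ?_)
  rcases lt_or_ge i (f (i, j)).1 with hlt | hge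
  · exact Or.inl hlt
  · exact Or.inr (mem_biUnion hge rfl)

theorem BiInvariant.finite_spread (hJ : ∀ i, IsIdeal (J i)) (hf : BiInvariant (FubiniSum J) f) :
    {i | ∀ k, movesTo f i k ∈ J i}.Finite := by
  refine not_infinite.mp fun hS => ?_
  set S := {i | ∀ k, movesTo f i k ∈ J i}
  set C := {p : ℕ × ℕ | p.1 ∈ S ∧ p.1 < (f p).1}
  have hC : C ∉ FubiniSum J := notMem_fubiniSum hS fun i hi hCi =>
    forward_notMem_of_forall_movesTo_mem (hJ i) hi ((hJ i).mono hCi fun j hj => ⟨hi, hj⟩)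
  set bad := {k | {j | (k, j) ∈ f '' C} ∉ J k}
  have hbad : bad.Infinite := fun hfin => hC ((hf.2 C).mp hfin)
  -- points of `C` move to later sections, so the `k`-th section of `f '' C` is covered by the
  -- images of the first `k` sections
  have hsource : ∀ k, ∃ m, k ∈ bad → m < k ∧ {j | (k, j) ∈ f '' {p ∈ C | p.1 = m}} ∉ J k := by
    intro k
    by_cases hk : k ∈ bad
    · obtain ⟨m, hm, hmk⟩ := (hJ k).exists_notMem_of_subset_biUnion (finite_Iio k) hk
        (A := fun m => {j | (k, j) ∈ f '' {p ∈ C | p.1 = m}}) fun j ⟨p, hp, hpj⟩ =>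
          mem_biUnion (show p.1 < k by simpa [hpj] using hp.2) ⟨p, ⟨hp, rfl⟩, hpj⟩
      exact ⟨m, fun _ => ⟨hm, hmk⟩⟩
    · exact ⟨0, fun h => absurd h hk⟩
  choose τ hτ using hsource
  obtain ⟨R, hRbad, hR, i₀, hfib⟩ := hbad.exists_subset_finite_fibers τ
  set E := {p ∈ C | (f p).1 ∈ R ∧ τ (f p).1 = p.1}
  have hE : E ∈ FubiniSum J := by
    refine mem_fubiniSum_of_forall_notMem (finite_singleton i₀) fun i hi => ?_
    by_cases hiS : i ∈ S
    · refine (hJ i).mono ((hJ i).biUnion_mem (hfib i hi) fun k _ => hiS k) ?_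
      rintro j ⟨-, hjR, hjτ⟩
      exact mem_biUnion ⟨hjR, hjτ⟩ rfl
    · exact (hJ i).mono (hJ i).empty_mem fun j hj => hiS hj.1.1
  refine notMem_fubiniSum hR (fun k hk hEk => (hτ k (hRbad hk)).2 ((hJ k).mono hEk ?_))
    ((hf.2 E).mpr hE)
  rintro j ⟨p, ⟨hpC, hpτ⟩, hpj⟩
  have hpk : (f p).1 = k := by rw [hpj]
  exact ⟨p, ⟨hpC, hpk ▸ hk, by rw [hpk, hpτ]⟩, hpj⟩

theorem exists_subset_movesTo_notMem_image_mem (hmax : ∀ i, MaximalIdeal (J i))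
    (hnoniso : ∀ i j, i ≠ j → ¬ Isomorphic (J i) (J j)) (hf : Injective f) {i k : ℕ}
    (hik : movesTo f i k ∩ {j | f (i, j) ≠ (i, j)} ∉ J i) :
    ∃ D ⊆ movesTo f i k, D ∉ J i ∧ rowMap f i '' D ∈ J k := by
  have hinj : InjOn (rowMap f i) (movesTo f i k ∩ {j | f (i, j) ≠ (i, j)}) :=
    (injOn_rowMap_movesTo hf i k).mono inter_subset_left
  obtain ⟨D, hD, hDi, hDk⟩ : ∃ D ⊆ movesTo f i k ∩ {j | f (i, j) ≠ (i, j)},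
      D ∉ J i ∧ rowMap f i '' D ∈ J k := by
    rcases eq_or_ne k i with rfl | hki
    · exact (hmax k).exists_subset_notMem_image_mem hik hinj
        fun j hj hjj => hj.2 (Prod.ext hj.1 hjj)
    · exact exists_subset_notMem_image_mem_of_not_isomorphic (hmax i) (hmax k)
        (hnoniso k i hki) hik hinj
  exact ⟨D, hD.trans inter_subset_left, hDi, hDk⟩

theorem BiInvariant.finite_moved (hmax : ∀ i, MaximalIdeal (J i))
    (hnoniso : ∀ i j, i ≠ j → ¬ Isomorphic (J i) (J j)) (hf : BiInvariant (FubiniSum J) f) :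
    {i | ∃ k, movesTo f i k ∩ {j | f (i, j) ≠ (i, j)} ∉ J i}.Finite := by
  refine not_infinite.mp fun hS => ?_
  set S := {i | ∃ k, movesTo f i k ∩ {j | f (i, j) ≠ (i, j)} ∉ J i}
  have hshrink : ∀ i, ∃ k D, i ∈ S → D ⊆ movesTo f i k ∧ D ∉ J i ∧ rowMap f i '' D ∈ J k := by
    intro i
    by_cases hi : i ∈ S
    · obtain ⟨k, hk⟩ := hi
      obtain ⟨D, hD⟩ := exists_subset_movesTo_notMem_image_mem hmax hnoniso hf.1 hk
      exact ⟨k, D, fun _ => hD⟩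
    · exact ⟨0, ∅, fun h => absurd h hi⟩
  choose σ D hD using hshrink
  obtain ⟨R, hRS, hR, k₀, hfib⟩ := hS.exists_subset_finite_fibers σ
  have hC : {p : ℕ × ℕ | p.1 ∈ R ∧ p.2 ∈ D p.1} ∉ FubiniSum J :=
    notMem_fubiniSum hR fun i hi hCi =>
      (hD i (hRS hi)).2.1 ((hmax i).1.mono hCi fun j hj => ⟨hi, hj⟩)
  exact hC ((hf.2 _).mp (image_mem_fubiniSum_of_finite_fibers (fun i => (hmax i).1) hfib
    (fun i hi => (hD i (hRS hi)).1) fun i hi => (hD i (hRS hi)).2.2))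

end FubiniSum

/-- the `Fin`-Fubini sum of pairwise non-isomorphic maximal
ideals satisfies condition (C1). -/
theorem stmt_12 (J : ℕ → Set (Set ℕ)) (hmax : ∀ i, MaximalIdeal (J i))
    (hnoniso : ∀ i j, i ≠ j → ¬ Isomorphic (J i) (J j)) :
    ∀ f : ℕ × ℕ → ℕ × ℕ, BiInvariant (FubiniSum J) f →
      (fixedSet f)ᶜ ∈ FubiniSum J := by
  intro f hf
  refine ((hf.finite_spread fun i => (hmax i).1).union (hf.finite_moved hmax hnoniso)).subset
    fun i hi => ?_
  by_cases hspread : ∀ k, movesTo f i k ∈ J i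
  · exact Or.inl hspread
  · push Not at hspread
    obtain ⟨k, hk⟩ := hspread
    exact Or.inr ⟨k, (hmax i).inter_notMem hk hi⟩
end

section
/- An ideal I on ω satisfies condition (C4) if and only if I is anti-homogeneous. -/
/-
(C4) amounts to `H(I) ⊆ I*`: a bi-`I`-invariant injection `g` is an isomorphism of `I` onto
`I|range g`, so testing (C4) on the indicator of `(range g)ᶜ` forces `(range g)ᶜ ∈ I`, and
conversely `I`-convergence along such a `g` transfers to the whole sequence.

Assume `H(I) ⊆ I*` and let `Aᶜ ∈ I`. If `A` contains an infinite `B ∈ I`, the map fixing `A \ B`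
and sending its complement (a member of `I`) bijectively onto `B` is an isomorphism `I ≅ I|A`.
Otherwise the members of `I` inside `A` are its finite subsets; splitting `A` into infinite
halves `D` and `A \ D`, the map fixing `Aᶜ` and sending `A` onto `D` shows `Aᶜ ∪ D ∈ H(I)`,
although its complement `A \ D` is not in `I`.
-/

open Set Filter

/-- `(x_n)` is `I`-convergent to `l`. -/
def IConv (I : Set (Set ℕ)) (x : ℕ → ℝ) (l : ℝ) : Prop :=
  ∀ ε : ℝ, 0 < ε → {n : ℕ | ε ≤ |x n - l|} ∈ I

/-- Condition (C4). -/
def CondC4 (I : Set (Set ℕ)) : Prop :=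
  ∀ (x : ℕ → ℝ) (l : ℝ),
    (∀ f : ℕ → ℕ, BiInvariant I f →
      ∃ g : ℕ → ℕ, BiInvariant I g ∧ IConv I (fun n => x (g (f n))) l) →
    IConv I x l

namespace Set

variable {X : Type*}

theorem Infinite.exists_bijOn [Countable X] {U V : Set X} (hU : U.Infinite) (hV : V.Infinite) :
    ∃ φ : X → X, BijOn φ U V := by
  have := hU.to_subtype
  have := hV.to_subtype
  obtain ⟨e⟩ : Nonempty (U ≃ V) := nonempty_equiv_of_countable
  set φ := Function.extend Subtype.val (fun u : U => (e u : X)) id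
  have hφ (u : U) : φ u = e u := Subtype.val_injective.extend_apply _ _ u
  refine ⟨φ, fun x hx => ?_, fun x hx y hy hxy => ?_, fun v hv => ?_⟩
  · rw [hφ ⟨x, hx⟩]
    exact (e _).2
  · rw [hφ ⟨x, hx⟩, hφ ⟨y, hy⟩] at hxy
    exact congrArg Subtype.val (e.injective (Subtype.ext hxy))
  · exact ⟨e.symm ⟨v, hv⟩, (e.symm _).2, by rw [hφ, Equiv.apply_symm_apply]⟩

theorem Infinite.exists_infinite_subset_infinite_diff {A : Set X} (hA : A.Infinite) :
    ∃ D ⊆ A, D.Infinite ∧ (A \ D).Infinite := by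
  obtain ⟨D, E, rfl, hDE, hcard⟩ := hA.exists_union_disjoint_cardinal_eq_of_infinite
  have hfin : D.Finite ↔ E.Finite := Equiv.set_finite_iff (Cardinal.eq.1 hcard).some
  have hD : D.Infinite := fun hD => hA (hD.union (hfin.1 hD))
  refine ⟨D, subset_union_left, hD, ?_⟩
  rw [union_sdiff_left, hDE.symm.sdiff_eq_left]
  exact fun hE => hD (hfin.2 hE)

theorem BijOn.finite_inter_preimage_iff {Y : Type*} {φ : X → Y} {U : Set X} {V C : Set Y}
    (hφ : BijOn φ U V) (hC : C ⊆ V) : (U ∩ φ ⁻¹' C).Finite ↔ C.Finite := by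
  rw [← finite_image_iff (hφ.injOn.mono inter_subset_left), image_inter_preimage, hφ.image_eq,
    inter_eq_right.2 hC]

end Set

namespace IsIdeal

variable {X : Type*} {I : Set (Set X)}

theorem mem_of_subset (hI : IsIdeal I) {A B : Set X} (hA : A ∈ I) (hBA : B ⊆ A) : B ∈ I :=
  hI.1 A B hA hBA

theorem union_mem_iff (hI : IsIdeal I) {A B : Set X} : A ∪ B ∈ I ↔ A ∈ I ∧ B ∈ I :=
  ⟨fun h => ⟨hI.mem_of_subset h subset_union_left, hI.mem_of_subset h subset_union_right⟩,
    fun h => hI.2.1 A B h.1 h.2⟩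

theorem finite_mem (hI : IsIdeal I) {A : Set X} (hA : A.Finite) : A ∈ I :=
  hI.2.2.1 A hA

theorem univ_notMem (hI : IsIdeal I) : univ ∉ I :=
  hI.2.2.2

theorem mem_restr_iff (hI : IsIdeal I) {A C : Set X} (hCA : C ⊆ A) : C ∈ restr I A ↔ C ∈ I :=
  ⟨fun ⟨_, hB, hC⟩ => hC ▸ hI.mem_of_subset hB inter_subset_left,
    fun hC => ⟨C, hC, (inter_eq_left.2 hCA).symm⟩⟩

theorem mem_HF_iff (hI : IsIdeal I) {A : Set X} :
    A ∈ HF I ↔ ∃ f : X → X, BijOn f univ A ∧ ∀ C ⊆ A, (C ∈ I ↔ f ⁻¹' C ∈ I) := by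
  refine exists_congr fun f => and_congr_right fun _ => forall₂_congr fun C hC => ?_
  rw [hI.mem_restr_iff hC, univ_inter, hI.mem_restr_iff (subset_univ _)]

theorem mem_HF_iff_exists_biInvariant (hI : IsIdeal I) {A : Set X} :
    A ∈ HF I ↔ ∃ g : X → X, BiInvariant I g ∧ range g = A := by
  rw [hI.mem_HF_iff]
  constructor
  · rintro ⟨g, hg, hgI⟩
    have hinj : g.Injective := injOn_univ.1 hg.injOn
    refine ⟨g, ⟨hinj, fun Y => ?_⟩, image_univ ▸ hg.image_eq⟩
    rw [hgI _ (hg.mapsTo.image_subset.trans' (image_mono (subset_univ Y))),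
      preimage_image_eq Y hinj]
  · rintro ⟨g, hg, rfl⟩
    refine ⟨g, ⟨fun n _ => mem_range_self n, hg.1.injOn, fun y ⟨n, hn⟩ => ⟨n, trivial, hn⟩⟩,
      fun C hC => ?_⟩
    rw [← hg.2 (g ⁻¹' C), image_preimage_eq_of_subset hC]

theorem union_mem_HF (hI : IsIdeal I) {S T : Set X} {φ : X → X} (hST : Disjoint S T)
    (hφ : BijOn φ Sᶜ T) (hφI : ∀ C ⊆ T, C ∈ I ↔ φ ⁻¹' C \ S ∈ I) : S ∪ T ∈ HF I := by
  classical
  rw [hI.mem_HF_iff]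
  refine ⟨S.piecewise id φ, ?_, fun C hC => ?_⟩
  · rw [← union_compl_self S]
    refine ((bijOn_id S).congr (piecewise_eqOn S id φ).symm).union
      (hφ.congr (piecewise_eqOn_compl S id φ).symm) ?_
    refine (injOn_union disjoint_compl_right).2 ⟨?_, ?_, fun x hx y hy hxy => ?_⟩
    · exact (injOn_id S).congr (piecewise_eqOn S id φ).symm
    · exact hφ.injOn.congr (piecewise_eqOn_compl S id φ).symm
    · rw [piecewise_eq_of_mem S id φ hx, piecewise_eq_of_notMem S id φ hy] at hxy
      exact hST.ne_of_mem hx (hφ.mapsTo hy) hxy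
  · have hC' : C = C ∩ S ∪ C ∩ T := by rw [← inter_union_distrib_left, inter_eq_left.2 hC]
    have hpre : φ ⁻¹' C \ S = φ ⁻¹' (C ∩ T) \ S := by
      ext x
      simp only [Set.mem_sdiff, mem_preimage, mem_inter_iff]
      exact ⟨fun h => ⟨⟨h.1, hφ.mapsTo h.2⟩, h.2⟩, fun h => ⟨h.1.1, h.2⟩⟩
    rw [piecewise_preimage, Set.ite, preimage_id, hI.union_mem_iff, hpre,
      ← hφI _ inter_subset_right, ← hI.union_mem_iff, ← hC']

theorem mem_HF_of_infinite_mem_subset [Countable X] (hI : IsIdeal I) {A B : Set X}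
    (hA : Aᶜ ∈ I) (hB : B ∈ I) (hBA : B ⊆ A) (hBinf : B.Infinite) : A ∈ HF I := by
  have hcompl : (A \ B)ᶜ ∈ I := by
    rw [Set.compl_sdiff]
    exact hI.union_mem_iff.2 ⟨hB, hA⟩
  obtain ⟨φ, hφ⟩ := (hBinf.mono (subset_compl_comm.1 (sdiff_subset_compl A B))).exists_bijOn hBinf
  rw [← sdiff_union_of_subset hBA]
  exact hI.union_mem_HF disjoint_sdiff_left hφ fun C hC =>
    iff_of_true (hI.mem_of_subset hB hC) (hI.mem_of_subset hcompl (sdiff_subset_compl _ _))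

theorem exists_infinite_mem_subset [Countable X] (hI : IsIdeal I) (hH : HF I ⊆ {A | Aᶜ ∈ I})
    {A : Set X} (hA : Aᶜ ∈ I) : ∃ B ∈ I, B ⊆ A ∧ B.Infinite := by
  by_contra! hfin
  have hmem : ∀ Y ⊆ A, Y ∈ I ↔ Y.Finite := fun Y hY => ⟨fun h => hfin Y h hY, hI.finite_mem⟩
  have hAinf : A.Infinite := fun hAfin =>
    hI.univ_notMem (union_compl_self A ▸ hI.union_mem_iff.2 ⟨hI.finite_mem hAfin, hA⟩)
  obtain ⟨D, hDA, hDinf, hADinf⟩ := hAinf.exists_infinite_subset_infinite_diff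
  obtain ⟨ψ, hψ⟩ := hAinf.exists_bijOn hDinf
  have hHF : Aᶜ ∪ D ∈ HF I := by
    refine hI.union_mem_HF (disjoint_compl_left.mono_right hDA) (by rwa [compl_compl])
      fun C hC => ?_
    rw [hmem C (hC.trans hDA), Set.sdiff_compl, hmem _ inter_subset_right, inter_comm,
      hψ.finite_inter_preimage_iff hC]
  have hcompl : (Aᶜ ∪ D)ᶜ ∈ I := hH hHF
  rw [compl_union, compl_compl, ← sdiff_eq] at hcompl
  exact hADinf (hfin _ hcompl sdiff_subset)

theorem mem_HF_of_compl_mem [Countable X] (hI : IsIdeal I) (hH : HF I ⊆ {A | Aᶜ ∈ I})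
    {A : Set X} (hA : Aᶜ ∈ I) : A ∈ HF I :=
  let ⟨_, hB, hBA, hBinf⟩ := hI.exists_infinite_mem_subset hH hA
  hI.mem_HF_of_infinite_mem_subset hA hB hBA hBinf

end IsIdeal

theorem biInvariant_id {X : Type*} (I : Set (Set X)) : BiInvariant I id :=
  ⟨Function.injective_id, fun A => by rw [image_id]⟩

section IConv

variable {I : Set (Set ℕ)}

theorem iConv_const (hI : IsIdeal I) (l : ℝ) : IConv I (fun _ => l) l := fun ε hε => by
  simpa [not_le.2 hε] using hI.finite_mem finite_empty

theorem IConv.of_comp_biInvariant (hI : IsIdeal I) {x : ℕ → ℝ} {l : ℝ} {g : ℕ → ℕ}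
    (hg : BiInvariant I g) (hrange : (range g)ᶜ ∈ I) (h : IConv I (fun n => x (g n)) l) :
    IConv I x l := fun ε hε => by
  set S := {n | ε ≤ |x n - l|}
  have himage : S ∩ range g ∈ I := by
    rw [← image_preimage_eq_inter_range]
    exact (hg.2 _).2 (h ε hε)
  exact hI.mem_of_subset (hI.union_mem_iff.2 ⟨himage, hrange⟩) fun n hn =>
    (em (n ∈ range g)).imp (⟨hn, ·⟩) id

theorem condC4_iff_HF_subset (hI : IsIdeal I) : CondC4 I ↔ HF I ⊆ {A | Aᶜ ∈ I} := by
  constructor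
  · intro hC4 A hA
    obtain ⟨p, hp, rfl⟩ := hI.mem_HF_iff_exists_biInvariant.1 hA
    have hconv : IConv I ((range p)ᶜ.indicator 1) 0 := hC4 _ _ fun f _ =>
      ⟨p, hp, by simpa using iConv_const hI 0⟩
    have hlevel : {n | (1 : ℝ) ≤ |(range p)ᶜ.indicator 1 n - 0|} = (range p)ᶜ := by
      ext n
      by_cases hn : n ∈ range p <;> simp [hn]
    show (range p)ᶜ ∈ I
    rw [← hlevel]
    exact hconv 1 one_pos
  · intro hH x l hx
    obtain ⟨g, hg, hconv⟩ := hx id (biInvariant_id I)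
    exact hconv.of_comp_biInvariant hI hg (hH (hI.mem_HF_iff_exists_biInvariant.2 ⟨g, hg, rfl⟩))

end IConv

/-- `I` satisfies (C4) iff `I` is anti-homogeneous. -/
theorem stmt_17 (I : Set (Set ℕ)) (hI : IsIdeal I) :
    CondC4 I ↔ AntiHomogIdeal I := by
  rw [condC4_iff_HF_subset hI, AntiHomogIdeal]
  exact ⟨fun hH => hH.antisymm fun A => hI.mem_HF_of_compl_mem hH, Eq.subset⟩
end
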